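/- In a hypohamiltonian graph G, no two vertices of degree 3 in G can have the same closed neighborhood. -/

import Mathlib

open SimpleGraph

/-- A finite simple graph is hypohamiltonian if it is not Hamiltonian, but the deletion of
every single vertex gives a Hamiltonian graph. -/
def IsHypohamiltonian {V : Type} [Fintype V] [DecidableEq V] (G : SimpleGraph V) : Prop :=
  ¬ G.IsHamiltonian ∧ ∀ v : V, (G.induce {u | u ≠ v}).IsHamiltonian

private lemma ham_rotate {α : Type*} [DecidableEq α] {G : SimpleGraph α} {a b : α}
    {p : G.Walk a a} (hp : p.IsHamiltonianCycle) (hb : b ∈ p.support) :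
    (p.rotate b hb).IsHamiltonianCycle := by
  refine ⟨hp.isCycle.rotate hb, fun w => ?_⟩
  rw [Walk.support_tail_of_not_nil _ (hp.isCycle.rotate hb).not_nil,
    (Walk.support_rotate p b hb).perm.count_eq,
    ← Walk.support_tail_of_not_nil _ hp.isCycle.not_nil]
  exact hp.isHamiltonian_tail w

private lemma splice {V : Type*} [DecidableEq V] {G : SimpleGraph V} {u z v : V}
    (R : G.Walk u z) (h' : G.Adj z u) (hvu : G.Adj v u) (hzv : G.Adj z v)
    (hcyc : (R.concat h').IsCycle)
    (hv : v ∉ (R.concat h').support)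
    (hcount : ∀ w, w ≠ v → (R.concat h').support.tail.count w = 1) :
    (Walk.cons hvu (R.concat hzv)).IsHamiltonianCycle := by
  have hsupp : (R.concat h').support = R.support ++ [u] := by
    rw [Walk.support_concat]
  have hvR : v ∉ R.support := fun hmem => hv (by rw [hsupp]; exact List.mem_append_left _ hmem)
  have hvu' : v ≠ u := hvu.ne
  have hzu : z ≠ u := h'.ne
  -- tail of support of R.concat
  have htail : (R.concat h').support.tail = R.support.tail ++ [u] := by
    rw [hsupp, R.support_eq_cons]; rfl
  have hcount' : ∀ w, w ≠ v → R.support.tail.count w + (if u = w then 1 else 0) = 1 := by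
    intro w hw
    have := hcount w hw
    rwa [htail, List.count_append, List.count_singleton'] at this
  have hut : u ∉ R.support.tail := by
    have := hcount' u hvu'.symm
    simp at this
    simpa [List.count_eq_zero] using this
  have hvt : v ∉ R.support.tail := fun hm => hvR (List.mem_of_mem_tail hm)
  -- counts for the new cycle's tail support
  have hQtail : (Walk.cons hvu (R.concat hzv)).support.tail = (u :: R.support.tail) ++ [v] := by
    simp only [Walk.support_cons, List.tail_cons, Walk.support_concat, List.concat_eq_append]
    rw [R.support_eq_cons]; simp
  have hQcount : ∀ w, (Walk.cons hvu (R.concat hzv)).support.tail.count w = 1 := by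
    intro w
    rw [hQtail]
    rcases eq_or_ne w v with rfl | hwv
    · rw [List.count_append, List.count_cons, List.count_singleton']
      simp [hvu'.symm, List.count_eq_zero.2 hvt]
    rcases eq_or_ne w u with rfl | hwu
    · rw [List.count_append, List.count_cons, List.count_singleton']
      simp [hwv, hvu', List.count_eq_zero.2 hut]
    · have := hcount' w hwv
      rw [if_neg (Ne.symm hwu)] at this
      rw [List.count_append, List.count_cons, List.count_singleton']
      simp [hwv, Ne.symm hwv, Ne.symm hwu, this]
  -- edges
  have hRedges : R.edges.Nodup := by
    have h2 := hcyc.edges_nodup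
    rw [Walk.edges_concat, List.concat_eq_append] at h2
    exact h2.of_append_left
  have hvuE : s(v, u) ∉ R.edges := fun hm => hvR (R.fst_mem_support_of_mem_edges hm)
  have hzvE : s(z, v) ∉ R.edges := fun hm => hvR (R.snd_mem_support_of_mem_edges hm)
  have hne : s(v, u) ≠ s(z, v) := by
    intro hEq
    rcases Sym2.eq_iff.mp hEq with ⟨h1, h2⟩ | ⟨h1, h2⟩
    · exact hvu' h2.symm
    · exact hzu h2.symm
  have hedges : (Walk.cons hvu (R.concat hzv)).edges.Nodup := by
    rw [Walk.edges_cons, Walk.edges_concat, List.concat_eq_append]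
    refine List.nodup_cons.2 ⟨?_, List.Nodup.append hRedges (List.nodup_singleton _) ?_⟩
    · simp only [List.mem_append, List.mem_singleton]
      rintro (h | h)
      · exact hvuE h
      · exact hne h
    · intro e he
      simp only [List.mem_singleton]
      rintro rfl
      exact hzvE he
  have htrail : (Walk.cons hvu (R.concat hzv)).IsTrail := ⟨hedges⟩
  have hcirc : (Walk.cons hvu (R.concat hzv)).IsCircuit := ⟨htrail, by simp⟩
  have hcyc2 : (Walk.cons hvu (R.concat hzv)).IsCycle :=
    ⟨hcirc, List.nodup_iff_count_le_one.2 fun w => le_of_eq (hQcount w)⟩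
  refine ⟨hcyc2, fun w => ?_⟩
  rw [Walk.support_tail_of_not_nil _ hcyc2.not_nil]
  exact hQcount w

/-- In a hypohamiltonian graph, no two vertices of degree 3 can have the same closed
neighborhood. -/
theorem stmt_7 {V : Type} [Fintype V] [DecidableEq V] (G : SimpleGraph V)
    [DecidableRel G.Adj] (hG : IsHypohamiltonian G) :
    ∀ u v : V, u ≠ v → G.degree u = 3 → G.degree v = 3 →
      insert u (G.neighborSet u) ≠ insert v (G.neighborSet v) := by
  intro u v huv hdu hdv h
  -- u and v are adjacent
  have huvAdj : G.Adj u v := by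
    have : v ∈ insert u (G.neighborSet u) := by rw [h]; exact Set.mem_insert _ _
    rcases this with h1 | h1
    · exact absurd h1.symm huv
    · exact h1
  -- every neighbor of u other than v is a neighbor of v
  have hadj : ∀ w, w ≠ v → G.Adj u w → G.Adj v w := by
    intro w hwv hw
    have : w ∈ insert v (G.neighborSet v) := by rw [← h]; exact Set.mem_insert_of_mem _ hw
    rcases this with h1 | h1
    · exact absurd h1 hwv
    · exact h1
  -- the vertex set minus v has ≥ 2 elements
  have hcard : Fintype.card {u_1 | u_1 ≠ v} ≠ 1 := by
    have hcard3 : (G.neighborFinset u).card = 3 := hdu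
    have h2 : 0 < ((G.neighborFinset u).erase v).card := by
      have := Finset.pred_card_le_card_erase (s := G.neighborFinset u) (a := v)
      omega
    obtain ⟨a, ha⟩ := Finset.card_pos.mp h2
    have hav : a ≠ v := Finset.ne_of_mem_erase ha
    have hua : G.Adj u a := by
      rw [← SimpleGraph.mem_neighborFinset]
      exact Finset.mem_of_mem_erase ha
    have : Nontrivial {u_1 | u_1 ≠ v} :=
      ⟨⟨u, huv⟩, ⟨a, hav⟩, by simp [hua.ne]⟩
    exact Fintype.one_lt_card.ne'
  obtain ⟨x, p, hp⟩ := hG.2 v hcard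
  have hu : u ∈ {u_1 | u_1 ≠ v} := huv
  have humem : (⟨u, hu⟩ : {u_1 | u_1 ≠ v}) ∈ p.support := hp.mem_support _
  have hp' := ham_rotate hp humem
  set p' := p.rotate _ humem with hp'def
  -- map to G
  let f := SimpleGraph.Embedding.induce (G := G) {u_1 | u_1 ≠ v}
  let P : G.Walk u u := p'.map f.toHom
  have hPcyc : P.IsCycle := hp'.isCycle.map f.injective
  have hPsupp : P.support = p'.support.map Subtype.val := Walk.support_map _ _
  have hvP : v ∉ P.support := by
    rw [hPsupp]
    simp only [List.mem_map]
    rintro ⟨⟨w, hw⟩, _, hwv2⟩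
    exact hw hwv2
  have hPcount : ∀ w, w ≠ v → P.support.tail.count w = 1 := by
    intro w hwv
    have hw : w ∈ {u_1 | u_1 ≠ v} := hwv
    have h1 : P.support.tail = p'.support.tail.map Subtype.val := by
      rw [hPsupp, p'.support_eq_cons]; rfl
    rw [h1, List.count_map_of_injective _ _ Subtype.val_injective (⟨w, hw⟩ : {u_1 | u_1 ≠ v})]
    rw [← Walk.support_tail_of_not_nil _ hp'.isCycle.not_nil]
    convert hp'.isHamiltonian_tail _ using 2
    exact lawful_beq_subsingleton _ _
  -- decompose P
  obtain ⟨y, h₁, P₁, hPeq⟩ : ∃ (y : V), ∃ (h₁ : G.Adj u y), ∃ (P₁ : G.Walk y u), P = Walk.cons h₁ P₁ := by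
    cases hPq : P with
    | nil => exact absurd hPq hPcyc.ne_nil
    | cons h q => exact ⟨_, h, q, rfl⟩
  obtain ⟨z, R, h', hReq⟩ := Walk.exists_cons_eq_concat h₁ P₁
  rw [hReq] at hPeq
  -- z is adjacent to v
  have hzP : z ∈ P.support := by
    rw [hPeq, Walk.support_concat]
    exact List.mem_append_left _ R.end_mem_support
  have hzv : G.Adj z v := by
    refine (hadj z (fun hz => hvP (hz ▸ hzP)) ?_).symm
    exact h'.symm
  -- splice v into the cycle
  rw [hPeq] at hPcyc hvP hPcount
  have hQ := splice R h' huvAdj.symm hzv hPcyc hvP hPcount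
  exact hG.1 (fun _ => ⟨v, _, hQ⟩)
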